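/- arXiv:2401.08635 — 2 statements merged into one kernel-verified Lean document; each statement's English description precedes it below -/
import Mathlib

section
/- For every A ⊆ ℕ there exists A' ⊆ ℕ such that A ⊕ A' = ∅. -/
/-!
`A ⊕ B = ∅` says that `n ∈ A ∆ B` exactly when `n - 1 ∈ A ∩ B`. Hence whether `n` lies in
`A'` is forced by `n ∈ A` and by whether `n - 1 ∈ A ∩ A'`, and `A'` can be defined by recursion
on `n`.
-/

open scoped symmDiff

def shift (A : Set ℕ) : Set ℕ := (· + 1) '' A

def kplus (A B : Set ℕ) : Set ℕ := (A ∆ B) ∆ shift (A ∩ B)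

open Classical in
noncomputable def stretch (A : Set ℕ) (n : ℕ) : ℕ :=
  if n ∈ A then sSup {k | k ≤ n ∧ Set.Icc (n - k) n ⊆ A} + 1 else 0

noncomputable def inv' (A : Set ℕ) : Set ℕ :=
  {x ∈ A | Odd (stretch A x)} ∪ {y | y ∉ A ∧ y > 0 ∧ Odd (stretch A (y - 1))}

theorem zero_notMem_shift (A : Set ℕ) : 0 ∉ shift A := by
  rintro ⟨a, -, ha⟩
  exact Nat.succ_ne_zero a ha

theorem succ_mem_shift_iff (A : Set ℕ) (n : ℕ) : n + 1 ∈ shift A ↔ n ∈ A := by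
  simp [shift]

theorem zero_mem_kplus_iff (A B : Set ℕ) : 0 ∈ kplus A B ↔ ¬(0 ∈ A ↔ 0 ∈ B) := by
  have := zero_notMem_shift (A ∩ B)
  simp only [kplus, Set.mem_symmDiff]
  tauto

theorem succ_mem_kplus_iff (A B : Set ℕ) (n : ℕ) :
    n + 1 ∈ kplus A B ↔ ¬((n + 1 ∈ A ↔ n + 1 ∈ B) ↔ ¬(n ∈ A ∧ n ∈ B)) := by
  simp only [kplus, Set.mem_symmDiff, succ_mem_shift_iff, Set.mem_inter_iff]
  tauto

def kplusInvMem (A : Set ℕ) : ℕ → Prop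
  | 0 => 0 ∈ A
  | n + 1 => (n + 1 ∈ A ↔ ¬(n ∈ A ∧ kplusInvMem A n))

theorem kplus_setOf_kplusInvMem (A : Set ℕ) : kplus A {n | kplusInvMem A n} = ∅ := by
  refine Set.eq_empty_of_forall_notMem fun n => ?_
  cases n with
  | zero => exact (zero_mem_kplus_iff _ _).not.mpr (not_not_intro Iff.rfl)
  | succ n =>
    rw [succ_mem_kplus_iff]
    change ¬¬((n + 1 ∈ A ↔ (n + 1 ∈ A ↔ ¬(n ∈ A ∧ kplusInvMem A n))) ↔ _)
    tauto

theorem stmt13 : ∀ A : Set ℕ, ∃ A' : Set ℕ, kplus A A' = ∅ :=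
  fun A => ⟨_, kplus_setOf_kplusInvMem A⟩
end

section
/- Let A ⊆ ℕ be nonempty and A' = {x ∈ A : stretch(A, x) odd} ∪ {y ∉ A : y > 0 and stretch(A, y−1) odd}. If x ∈ A \ A', then x ≥ 1, x − 1 ∈ A ∩ A', and hence x ∈ (A ∩ A') + 1. -/
/-! `stretch A n` is the length of the run of `A` ending at `n`, so it satisfies the recursion
`stretch A (n + 1) = stretch A n + 1` for `n + 1 ∈ A`. If `x ∈ A \ A'`, then `stretch A x` is even
and positive, hence `x ≠ 0` (as `stretch A 0 = 1`) and `stretch A (x - 1)` is odd, so `x - 1 ∈ A ∩ A'`. -/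

open scoped symmDiff

def runLengths (A : Set ℕ) (n : ℕ) : Set ℕ := {k | k ≤ n ∧ Set.Icc (n - k) n ⊆ A}

section Stretch

variable {A : Set ℕ} {n : ℕ}

lemma stretch_of_mem (h : n ∈ A) : stretch A n = sSup (runLengths A n) + 1 := if_pos h

lemma stretch_of_not_mem (h : n ∉ A) : stretch A n = 0 := if_neg h

lemma mem_of_stretch_ne_zero (h : stretch A n ≠ 0) : n ∈ A :=
  of_not_not fun hn => h (stretch_of_not_mem hn)

lemma bddAbove_runLengths : BddAbove (runLengths A n) := ⟨n, fun _ hk => hk.1⟩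

lemma zero_mem_runLengths (h : n ∈ A) : 0 ∈ runLengths A n :=
  ⟨n.zero_le, by simpa using h⟩

lemma succ_mem_runLengths_succ_iff (h : n + 1 ∈ A) {j : ℕ} :
    j + 1 ∈ runLengths A (n + 1) ↔ j ∈ runLengths A n := by
  simp only [runLengths, Set.mem_ofPred_eq, Nat.add_sub_add_right, add_le_add_iff_right]
  refine and_congr_right fun hj => ⟨fun hA => (Set.Icc_subset_Icc_right n.le_succ).trans hA,
    fun hA m hm => ?_⟩
  rcases (Set.mem_Icc.mp hm).2.eq_or_lt with rfl | hlt
  · exact h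
  · exact hA ⟨hm.1, Nat.lt_succ_iff.mp hlt⟩

lemma stretch_zero_of_mem (h : 0 ∈ A) : stretch A 0 = 1 := by
  rw [stretch_of_mem h, add_eq_right]
  exact IsGreatest.csSup_eq ⟨zero_mem_runLengths h, fun _ hk => hk.1⟩

lemma stretch_succ_of_mem (hsucc : n + 1 ∈ A) : stretch A (n + 1) = stretch A n + 1 := by
  rw [stretch_of_mem hsucc, add_left_inj]
  by_cases hn : n ∈ A
  · rw [stretch_of_mem hn]
    refine IsGreatest.csSup_eq ⟨(succ_mem_runLengths_succ_iff hsucc).mpr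
      (Nat.sSup_mem ⟨0, zero_mem_runLengths hn⟩ bddAbove_runLengths), ?_⟩
    rintro (_ | j) hj
    · exact Nat.zero_le _
    · exact Nat.succ_le_succ
        (le_csSup bddAbove_runLengths ((succ_mem_runLengths_succ_iff hsucc).mp hj))
  · rw [stretch_of_not_mem hn]
    refine IsGreatest.csSup_eq ⟨zero_mem_runLengths hsucc, ?_⟩
    rintro (_ | j) hj
    · exact le_rfl
    · exact absurd (((succ_mem_runLengths_succ_iff hsucc).mp hj).2 ⟨Nat.sub_le n j, le_rfl⟩) hn

end Stretch

theorem stmt14 : ∀ A : Set ℕ, A.Nonempty → ∀ x ∈ A \ inv' A,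
    1 ≤ x ∧ x - 1 ∈ A ∩ inv' A ∧ x ∈ shift (A ∩ inv' A) := by
  rintro A - x ⟨hxA, hxI⟩
  have hx_even : ¬Odd (stretch A x) := fun h => hxI (Or.inl ⟨hxA, h⟩)
  obtain ⟨m, rfl⟩ : ∃ m, x = m + 1 := by
    rcases x with _ | m
    · exact absurd (stretch_zero_of_mem hxA ▸ odd_one) hx_even
    · exact ⟨m, rfl⟩
  have hm_odd : Odd (stretch A m) := by
    rwa [stretch_succ_of_mem hxA, Nat.odd_add_one, not_not] at hx_even
  have hm : m ∈ A := mem_of_stretch_ne_zero hm_odd.pos.ne'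
  have hm' : m ∈ A ∩ inv' A := ⟨hm, Or.inl ⟨hm, hm_odd⟩⟩
  exact ⟨Nat.le_add_left 1 m, hm', m, hm', rfl⟩
end
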